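/- arXiv:2309.01291 — 3 statements merged into one kernel-verified Lean document; each statement's English description precedes it below -/
import Mathlib

section
/- Existence form of Theorem 1 (BJR guarantee of the greedy democratic process): For every finite nonempty type U of statements, every finite set N of n ≥ 1 agents with utility functions u_i : U → ℝ, and every slate size k ≥ 1, there exists a slate satisfying balanced justified representation; that is, there exist statements α_1, …, α_k ∈ U and an assignment ω : N → {1,…,k} such that each index j ∈ {1,…,k} is assigned either ⌊n/k⌋ or ⌈n/k⌉ agents, and there is no coalition S ⊆ N, statement α ∈ U, and threshold θ ∈ ℝ with |S| ≥ n/k, u_i(α) ≥ θ for all i ∈ S, and u_i(α_{ω(i)}) < θ for all i ∈ S. -/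
lemma bjr_div_facts (r k : ℕ) (hk : 1 ≤ k) :
    r / (k+1) ≤ (r - (r+k)/(k+1)) / k
    ∧ (r - (r+k)/(k+1) + k - 1) / k ≤ (r+k)/(k+1)
    ∧ (r+k)/(k+1) ≤ r/(k+1) + 1 := by
  obtain ⟨q, s, hs, hr⟩ : ∃ q s, s < k+1 ∧ r = (k+1)*q + s :=
    ⟨r/(k+1), r%(k+1), Nat.mod_lt _ (Nat.succ_pos k), (Nat.div_add_mod r (k+1)).symm⟩
  subst hr
  have hq : ((k+1)*q + s) / (k+1) = q := by
    rw [Nat.mul_add_div (Nat.succ_pos k), Nat.div_eq_of_lt hs, Nat.add_zero]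
  have hm : ((k+1)*q + s + k) / (k+1) = q + (s+k)/(k+1) := by
    rw [Nat.add_assoc, Nat.mul_add_div (Nat.succ_pos k)]
  have hecases : (s = 0 ∧ (s+k)/(k+1) = 0) ∨ (1 ≤ s ∧ (s+k)/(k+1) = 1) := by
    rcases Nat.eq_zero_or_pos s with h | h
    · left; exact ⟨h, by rw [h]; exact Nat.div_eq_of_lt (by omega)⟩
    · right
      refine ⟨h, ?_⟩
      have h1 : s + k = (s-1) + 1*(k+1) := by omega
      rw [h1, Nat.add_mul_div_right _ _ (Nat.succ_pos k), Nat.div_eq_of_lt (by omega)]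
  set e := (s+k)/(k+1) with he
  have hse : e ≤ s := by omega
  have hsub : (k+1)*q + s - (q + e) = k*q + (s - e) := by
    have h2 : (k+1)*q = k*q + q := by ring
    omega
  rw [hm, hq, hsub]
  have hfloor : (k*q + (s-e))/k = q := by
    rw [Nat.mul_add_div (by omega), Nat.div_eq_of_lt (by omega), Nat.add_zero]
  have hceil : (k*q + (s-e) + k - 1)/k = q + ((s-e) + k - 1)/k := by
    have h3 : k*q + (s-e) + k - 1 = k*q + ((s-e) + k - 1) := by omega
    rw [h3, Nat.mul_add_div (by omega)]
  have hlast : ((s-e) + k - 1)/k ≤ e := by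
    rcases hecases with ⟨h0, he0⟩ | ⟨h1, he1⟩
    · have h4 : (s-e) + k - 1 = k - 1 := by omega
      rw [h4, he0]
      have := Nat.div_eq_of_lt (show k - 1 < k by omega)
      omega
    · rw [he1]
      refine Nat.lt_succ_iff.mp ?_
      rw [Nat.div_lt_iff_lt_mul (by omega : 0 < k)]
      omega
  exact ⟨by omega, by omega, by omega⟩

lemma bjr_aux {U ι : Type*} [Fintype U] [Nonempty U] [DecidableEq ι]
    (u : ι → U → ℝ) :
    ∀ k : ℕ, 1 ≤ k → ∀ (R : Finset ι) (c : ℕ), (R.card + k - 1) / k ≤ c →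
    ∃ (α : Fin k → U) (ω : ι → Fin k),
      (∀ j : Fin k, (R.filter fun i => ω i = j).card = R.card / k ∨
        (R.filter fun i => ω i = j).card = (R.card + k - 1) / k) ∧
      ∀ S : Finset ι, S ⊆ R → S.Nonempty → c ≤ S.card →
        ∀ (a : U) (θ : ℝ), (∀ i ∈ S, θ ≤ u i a) → ∃ i ∈ S, θ ≤ u i (α (ω i)) := by
  intro k hk
  induction k, hk using Nat.le_induction with
  | base =>
    intro R c hc
    rcases R.eq_empty_or_nonempty with hR | hR
    · refine ⟨fun _ => Classical.arbitrary U, fun _ => 0, ?_, ?_⟩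
      · intro j; left; simp [hR]
      · intro S hS hne hcS a θ hθ
        rw [hR, Finset.subset_empty] at hS
        simp [hS] at hne
    · obtain ⟨a0, -, ha0⟩ := Finset.exists_max_image Finset.univ
        (fun a => R.inf' hR (fun i => u i a)) Finset.univ_nonempty
      refine ⟨fun _ => a0, fun _ => 0, ?_, ?_⟩
      · intro j
        left
        rw [Nat.div_one, Finset.filter_true_of_mem (fun i _ => Subsingleton.elim _ _)]
      · intro S hS hne hcS a θ hθ
        have hcard : R.card ≤ c := by simpa using hc
        have hSR : S = R := Finset.eq_of_subset_of_card_le hS (by omega)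
        obtain ⟨i, hi⟩ := hne
        refine ⟨i, hi, ?_⟩
        have h1 : θ ≤ R.inf' hR (fun j => u j a) :=
          Finset.le_inf' _ _ (fun j hj => hθ j (by rw [hSR]; exact hj))
        have h2 := ha0 a (Finset.mem_univ a)
        have h3 : R.inf' hR (fun j => u j a0) ≤ u i a0 :=
          Finset.inf'_le _ (hSR ▸ hi)
        simp only []
        linarith
  | succ k hk ih =>
    intro R c hc
    rcases R.eq_empty_or_nonempty with hR | hR
    · refine ⟨fun _ => Classical.arbitrary U, fun _ => 0, ?_, ?_⟩
      · intro j; left; simp [hR]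
      · intro S hS hne hcS a θ hθ
        rw [hR, Finset.subset_empty] at hS
        simp [hS] at hne
    · set r := R.card with hrdef
      have hr1 : 1 ≤ r := Finset.card_pos.mpr hR
      have hceil : r + (k+1) - 1 = r + k := by omega
      rw [hceil] at hc ⊢
      obtain ⟨F1, F2, F3⟩ := bjr_div_facts r k hk
      set m := (r + k)/(k+1) with hm
      have hm1 : 1 ≤ m := by
        rw [hm]
        exact (Nat.le_div_iff_mul_le (by omega)).mpr (by omega)
      have hmr : m ≤ r := by
        have h1 : r + k ≤ (k+1)*r + k := by nlinarith
        have h2 : ((k+1)*r + k)/(k+1) = r := by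
          rw [Nat.mul_add_div (by omega), Nat.div_eq_of_lt (by omega), Nat.add_zero]
        rw [hm]
        exact le_trans (Nat.div_le_div_right h1) (le_of_eq h2)
      have hcand : ((Finset.univ : Finset U) ×ˢ R.powersetCard m).Nonempty :=
        Finset.univ_nonempty.product (Finset.powersetCard_nonempty.mpr hmr)
      obtain ⟨⟨a0, T⟩, hmemT, hopt⟩ := Finset.exists_max_image _
        (fun p : U × Finset ι =>
          if h : p.2.Nonempty then p.2.inf' h (fun i => u i p.1) else 0) hcand
      obtain ⟨hTsub, hTcard⟩ := Finset.mem_powersetCard.mp (Finset.mem_product.mp hmemT).2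
      replace hTsub : T ⊆ R := hTsub
      replace hTcard : T.card = m := hTcard
      have hTne : T.Nonempty := Finset.card_pos.mp (by omega)
      have hRT : (R \ T).card = r - m := by rw [Finset.card_sdiff_of_subset hTsub, hTcard]
      obtain ⟨α', ω', hbal', hprop'⟩ := ih (R \ T) c (by rw [hRT]; omega)
      rw [hRT] at hbal'
      refine ⟨Fin.cons a0 α', fun i => if i ∈ T then 0 else (ω' i).succ, ?_, ?_⟩
      · intro j
        refine Fin.cases ?_ ?_ j
        · right
          have hfil : R.filter
              (fun i => (if i ∈ T then (0 : Fin (k+1)) else (ω' i).succ) = 0) = T := by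
            ext i
            simp only [Finset.mem_filter]
            constructor
            · rintro ⟨hiR, hif⟩
              by_contra hiT
              rw [if_neg hiT] at hif
              exact (Fin.succ_ne_zero _) hif
            · intro hiT
              exact ⟨hTsub hiT, by rw [if_pos hiT]⟩
          rw [hfil, hTcard]
        · intro j'
          have heq : R.filter
              (fun i => (if i ∈ T then (0 : Fin (k+1)) else (ω' i).succ) = j'.succ)
              = (R \ T).filter (fun i => ω' i = j') := by
            ext i
            simp only [Finset.mem_filter, Finset.mem_sdiff]
            constructor
            · rintro ⟨hiR, hif⟩
              by_cases hiT : i ∈ T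
              · rw [if_pos hiT] at hif
                exact absurd hif.symm (Fin.succ_ne_zero _)
              · rw [if_neg hiT] at hif
                exact ⟨⟨hiR, hiT⟩, Fin.succ_injective _ hif⟩
            · rintro ⟨⟨hiR, hiT⟩, hω⟩
              exact ⟨hiR, by rw [if_neg hiT, hω]⟩
          rw [heq]
          have hmono : (r - m)/k ≤ (r - m + k - 1)/k :=
            Nat.div_le_div_right (by omega)
          rcases hbal' j' with h | h <;> rw [h] <;> omega
      · intro S hSR hSne hcS a θ hθ
        by_cases hST : (S ∩ T).Nonempty
        · obtain ⟨i0, hi0⟩ := hST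
          rw [Finset.mem_inter] at hi0
          have hmS : m ≤ S.card := le_trans hc hcS
          obtain ⟨S', hS'sub, hS'card⟩ := Finset.exists_subset_card_eq hmS
          have hS'ne : S'.Nonempty := Finset.card_pos.mp (by omega)
          have hS'mem : (a, S') ∈ (Finset.univ : Finset U) ×ˢ R.powersetCard m :=
            Finset.mem_product.mpr ⟨Finset.mem_univ _,
              Finset.mem_powersetCard.mpr ⟨hS'sub.trans hSR, hS'card⟩⟩
          have hle := hopt (a, S') hS'mem
          simp only [dif_pos hS'ne, dif_pos hTne] at hle
          refine ⟨i0, hi0.1, ?_⟩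
          have h1 : θ ≤ S'.inf' hS'ne (fun i => u i a) :=
            Finset.le_inf' _ _ (fun j hj => hθ j (hS'sub hj))
          have h2 : T.inf' hTne (fun i => u i a0) ≤ u i0 a0 :=
            Finset.inf'_le _ hi0.2
          simp only [if_pos hi0.2, Fin.cons_zero]
          linarith
        · have hSsub : S ⊆ R \ T := fun i hi => Finset.mem_sdiff.mpr
            ⟨hSR hi, fun hiT => hST ⟨i, Finset.mem_inter.mpr ⟨hi, hiT⟩⟩⟩
          obtain ⟨i, hiS, hθi⟩ := hprop' S hSsub hSne hcS a θ hθ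
          refine ⟨i, hiS, ?_⟩
          have hiT : i ∉ T := (Finset.mem_sdiff.mp (hSsub hiS)).2
          simpa only [if_neg hiT, Fin.cons_succ] using hθi


/-- Existence form of Theorem 1 (BJR guarantee of the greedy democratic process):
for every finite nonempty universe `U` of statements, every finite type `ι` of `n ≥ 1`
agents with utilities `u i : U → ℝ`, and every slate size `k ≥ 1`, there exists a slate
`α : Fin k → U` together with a balanced assignment `ω : ι → Fin k` (each index is
assigned `⌊n/k⌋` or `⌈n/k⌉` agents) such that no coalition `S` with `|S| ≥ n/k`
(i.e. `n ≤ k * |S|`), statement `a`, and threshold `θ` satisfy `u i a ≥ θ` for all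
`i ∈ S` while `u i (α (ω i)) < θ` for all `i ∈ S`. -/
theorem bjr_slate_exists {U ι : Type*} [Fintype U] [Nonempty U] [Fintype ι]
    (n k : ℕ) (hn : Fintype.card ι = n) (hn1 : 1 ≤ n) (hk : 1 ≤ k)
    (u : ι → U → ℝ) :
    ∃ (α : Fin k → U) (ω : ι → Fin k),
      (∀ j : Fin k,
        (Finset.univ.filter fun i => ω i = j).card = n / k ∨
        (Finset.univ.filter fun i => ω i = j).card = (n + k - 1) / k) ∧
      ¬ ∃ (S : Finset ι) (a : U) (θ : ℝ),
          n ≤ k * S.card ∧ (∀ i ∈ S, θ ≤ u i a) ∧ (∀ i ∈ S, u i (α (ω i)) < θ) := by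
  classical
  have hcard : (Finset.univ : Finset ι).card = n := by rw [Finset.card_univ, hn]
  obtain ⟨α, ω, hbal, hprop⟩ := bjr_aux u k hk Finset.univ ((n + k - 1)/k)
    (by rw [hcard])
  refine ⟨α, ω, ?_, ?_⟩
  · intro j
    have := hbal j
    rwa [hcard] at this
  · rintro ⟨S, a, θ, hSk, h1, h2⟩
    have hSne : S.Nonempty := by
      rw [Finset.nonempty_iff_ne_empty]
      rintro rfl
      simp at hSk
      omega
    have hcS : (n + k - 1)/k ≤ S.card := by
      refine Nat.le_of_lt_succ ?_
      rw [Nat.div_lt_iff_lt_mul (by omega : 0 < k)]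
      calc n + k - 1 < n + k := by omega
        _ ≤ k * S.card + k := by omega
        _ = (S.card + 1) * k := by ring
    obtain ⟨i, hiS, hθ⟩ := hprop S (Finset.subset_univ S) hSne hcS a θ h1
    exact absurd (h2 i hiS) (not_lt.mpr hθ)
end

section
/- Simulation of large generative queries by size-r queries (core identity of Proposition 2): Let U be a nonempty finite set of statements, S a nonempty finite set of agents, u : S → U → ℝ, and r an integer with 1 ≤ r ≤ |S|. Then max_{α ∈ U} (the r-th largest value of i ↦ u(i)(α) on S) = max over subsets T ⊆ S with |T| = r of (max_{α ∈ U} min_{i ∈ T} u(i)(α)). -/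
/-- The `r`-th largest element (1-indexed) of a multiset of reals: the `r`-th entry of a
non-increasing enumeration, obtained as entry `card - r` (0-indexed) of the ascending
sort. -/
noncomputable def rthLargest (s : Multiset ℝ) (r : ℕ) : ℝ :=
  (s.sort (· ≤ ·)).getD (Multiset.card s - r) 0

/-!
If `x` is the `r`-th largest value of `f` on `S`, then at least `r` agents have `f ≥ x` and
fewer than `r` have `f > x` (read off the sorted list of values). Hence some `r`-subset has
minimum `≥ x` and every `r`-subset has minimum `≤ x`, so `x` is the largest minimum over
`r`-subsets. Applying this to `i ↦ u i α` for each `α` and exchanging the two maxima gives the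
identity.
-/

namespace List.SortedLE

variable {α : Type*} [Preorder α] [DecidableLE α] {l : List α}

theorem length_sub_le_countP_getElem_le (hl : l.SortedLE) {k : ℕ} (hk : k < l.length) :
    l.length - k ≤ l.countP (fun y => l[k] ≤ y) := by
  have hdrop : ∀ y ∈ l.drop k, l[k] ≤ y := by
    rw [List.forall_mem_iff_getElem]
    intro j hj
    rw [List.getElem_drop]
    exact hl.getElem_le_getElem_of_le (Nat.le_add_right k j)
  calc l.length - k = (l.drop k).countP (fun y => l[k] ≤ y) := by
        rw [List.countP_eq_length.mpr (by simpa using hdrop), List.length_drop]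
    _ ≤ l.countP (fun y => l[k] ≤ y) := (l.drop_sublist k).countP_le

theorem lt_countP_le_getElem (hl : l.SortedLE) {k : ℕ} (hk : k < l.length) :
    k < l.countP (fun y => y ≤ l[k]) := by
  have htake : ∀ y ∈ l.take (k + 1), y ≤ l[k] := by
    rw [List.forall_mem_iff_getElem]
    intro j hj
    rw [List.getElem_take]
    exact hl.getElem_le_getElem_of_le (by rw [List.length_take] at hj; omega)
  calc k < (l.take (k + 1)).countP (fun y => y ≤ l[k]) := by
        rw [List.countP_eq_length.mpr (by simpa using htake), List.length_take]; omega
    _ ≤ l.countP (fun y => y ≤ l[k]) := (l.take_sublist (k + 1)).countP_le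

end List.SortedLE

theorem Multiset.sortedLE_sort {α : Type*} [LinearOrder α] (s : Multiset α) :
    (s.sort (· ≤ ·)).SortedLE :=
  List.sortedLE_iff_pairwise.mpr (s.pairwise_sort _)

theorem Multiset.countP_eq_countP_sort {α : Type*} [LinearOrder α] (s : Multiset α)
    (p : α → Prop) [DecidablePred p] :
    s.countP p = (s.sort (· ≤ ·)).countP (fun y => p y) := by
  rw [← Multiset.coe_countP, Multiset.sort_eq]

section rthLargest

variable {s : Multiset ℝ} {r : ℕ}

theorem rthLargest_eq_getElem_sort (hr : 1 ≤ r) (hrs : r ≤ Multiset.card s) :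
    rthLargest s r = (s.sort (· ≤ ·))[Multiset.card s - r]'
      (by rw [Multiset.length_sort]; omega) :=
  List.getD_eq_getElem _ _ _

theorem le_countP_rthLargest_le (hr : 1 ≤ r) (hrs : r ≤ Multiset.card s) :
    r ≤ s.countP (rthLargest s r ≤ ·) := by
  have := List.SortedLE.length_sub_le_countP_getElem_le s.sortedLE_sort
    (k := Multiset.card s - r) (by rw [Multiset.length_sort]; omega)
  rw [← rthLargest_eq_getElem_sort hr hrs, Multiset.length_sort] at this
  rw [Multiset.countP_eq_countP_sort]
  omega

theorem countP_rthLargest_lt_lt (hr : 1 ≤ r) (hrs : r ≤ Multiset.card s) :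
    s.countP (rthLargest s r < ·) < r := by
  have := List.SortedLE.lt_countP_le_getElem s.sortedLE_sort
    (k := Multiset.card s - r) (by rw [Multiset.length_sort]; omega)
  rw [← rthLargest_eq_getElem_sort hr hrs, ← Multiset.countP_eq_countP_sort] at this
  have hsplit := Multiset.card_eq_countP_add_countP (rthLargest s r < ·) s
  simp only [not_lt] at hsplit
  omega

end rthLargest

namespace Finset

theorem countP_map_val {ι α : Type*} (S : Finset ι) (f : ι → α) (p : α → Prop)
    [DecidablePred p] : (S.val.map f).countP p = #{i ∈ S | p (f i)} := by
  rw [Multiset.countP_map]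
  rfl

theorem nonempty_of_mem_powersetCard {ι : Type*} {S T : Finset ι} {r : ℕ} (hr : 1 ≤ r)
    (hT : T ∈ S.powersetCard r) : T.Nonempty :=
  card_pos.mp ((mem_powersetCard.mp hT).2 ▸ hr)

variable {ι : Type*} {S : Finset ι} {f : ι → ℝ} {r : ℕ}

theorem exists_mem_powersetCard_forall_rthLargest_le (hr : 1 ≤ r) (hrS : r ≤ #S) :
    ∃ T ∈ S.powersetCard r, ∀ i ∈ T, rthLargest (S.val.map f) r ≤ f i := by
  have hcard : r ≤ #{i ∈ S | rthLargest (S.val.map f) r ≤ f i} := by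
    simpa only [countP_map_val] using
      le_countP_rthLargest_le (s := S.val.map f) hr (by rwa [Multiset.card_map])
  obtain ⟨T, hTsub, hTcard⟩ := exists_subset_card_eq hcard
  exact ⟨T, mem_powersetCard.mpr ⟨hTsub.trans (filter_subset _ _), hTcard⟩,
    fun i hi => (mem_filter.mp (hTsub hi)).2⟩

theorem exists_mem_le_rthLargest_of_mem_powersetCard (hr : 1 ≤ r) (hrS : r ≤ #S)
    {T : Finset ι} (hT : T ∈ S.powersetCard r) : ∃ i ∈ T, f i ≤ rthLargest (S.val.map f) r := by
  obtain ⟨hTS, hTcard⟩ := mem_powersetCard.mp hT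
  by_contra! hgt
  have hcard : #{i ∈ S | rthLargest (S.val.map f) r < f i} < r := by
    simpa only [countP_map_val] using
      countP_rthLargest_lt_lt (s := S.val.map f) hr (by rwa [Multiset.card_map])
  have hsub : T ⊆ {i ∈ S | rthLargest (S.val.map f) r < f i} :=
    fun i hi => mem_filter.mpr ⟨hTS hi, hgt i hi⟩
  have := card_le_card hsub
  omega

theorem rthLargest_map_eq_sup'_inf' (hr : 1 ≤ r) (hrS : r ≤ #S) :
    rthLargest (S.val.map f) r =
      (S.powersetCard r).attach.sup' (attach_nonempty_iff.mpr (powersetCard_nonempty.mpr hrS))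
        fun T => T.1.inf' (nonempty_of_mem_powersetCard hr T.2) f := by
  apply le_antisymm
  · obtain ⟨T, hT, hle⟩ := exists_mem_powersetCard_forall_rthLargest_le (f := f) hr hrS
    exact le_sup'_of_le _ (mem_attach _ ⟨T, hT⟩) (le_inf' _ _ hle)
  · refine sup'_le _ _ fun ⟨T, hT⟩ _ => ?_
    obtain ⟨i, hi, hle⟩ := exists_mem_le_rthLargest_of_mem_powersetCard (f := f) hr hrS hT
    exact inf'_le_of_le _ hi hle

end Finset

/-- Simulation of large generative queries by size-`r` queries (core identity of
Proposition 2): for a nonempty finite universe `U` of statements, a nonempty finite set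
`S` of agents, utilities `u : ι → U → ℝ`, and `1 ≤ r ≤ |S|`,
`max_{α ∈ U} (r-th largest of i ↦ u i α on S)`
equals `max_{T ⊆ S, |T| = r} max_{α ∈ U} min_{i ∈ T} u i α`. -/
theorem gen_query_simulation {U ι : Type*} [Fintype U] [Nonempty U]
    (S : Finset ι) (u : ι → U → ℝ)
    (r : ℕ) (hr : 1 ≤ r) (hrS : r ≤ S.card) :
    Finset.univ.sup' Finset.univ_nonempty
        (fun a : U => rthLargest (S.val.map fun i => u i a) r) =
      (S.powersetCard r).attach.sup'
        (Finset.attach_nonempty_iff.mpr (Finset.powersetCard_nonempty.mpr hrS))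
        (fun T => Finset.univ.sup' Finset.univ_nonempty (fun a : U =>
          T.1.inf'
            (Finset.card_pos.mp
              (by rw [(Finset.mem_powersetCard.mp T.2).2]; exact hr))
            (fun i => u i a))) := by
  rw [← Finset.sup'_comm]
  exact Finset.sup'_congr _ rfl fun a _ => Finset.rthLargest_map_eq_sup'_inf' hr hrS
end

section
/- Probabilistic-method coloring claim at the core of Theorem 2: Let n, k, q be positive integers with 8 ∣ n, 2k ∣ n, k even and k ≥ 2, and q < (2/k)·e^{n/(12k)}. Let N be a set of n agents and let S_1, …, S_q be subsets of N, each of cardinality n/8. Then there exists a coloring c : N → {1, …, k/2} such that for every j ∈ {1, …, q} and every color γ ∈ {1, …, k/2}, fewer than n/(2k) elements of S_j receive color γ, i.e., |{i ∈ S_j : c(i) = γ}| < n/(2k). -/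
set_option maxHeartbeats 1000000

/-- Probabilistic-method coloring claim at the core of Theorem 2: let `n, k, q` be
positive integers with `8 ∣ n`, `2k ∣ n`, `k` even, `k ≥ 2`, and
`q < (2/k)·e^{n/(12k)}`. If `S_1, …, S_q` are subsets of a set `N` of `n` agents, each of
cardinality `n/8`, then there is a coloring `c : N → {1, …, k/2}` such that for every
`j` and every color `γ`, fewer than `n/(2k)` elements of `S_j` receive color `γ`. -/
theorem coloring_exists {ι : Type*} (n k q : ℕ)
    (hn : 0 < n) (hk2 : 2 ≤ k) (hkeven : Even k) (hq : 0 < q)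
    (h8 : 8 ∣ n) (h2k : 2 * k ∣ n)
    (hqbound : (q : ℝ) < 2 / k * Real.exp (n / (12 * k)))
    (N : Finset ι) (hN : N.card = n)
    (S : Fin q → Finset ι) (hS : ∀ j, S j ⊆ N) (hScard : ∀ j, (S j).card = n / 8) :
    ∃ c : ι → Fin (k / 2), ∀ (j : Fin q) (γ : Fin (k / 2)),
      ((S j).filter fun i => c i = γ).card < n / (2 * k) := by
  classical
  set K := k / 2 with hKdef
  have hkK : k = 2 * K := by
    have := Nat.even_iff.mp hkeven; omega
  have hK1 : 1 ≤ K := by omega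
  obtain ⟨m, hm⟩ := h8
  obtain ⟨t, ht⟩ := h2k
  have hm1 : 1 ≤ m := by
    rcases Nat.eq_zero_or_pos m with h | h
    · omega
    · exact h
  have ht1 : 1 ≤ t := by
    rcases Nat.eq_zero_or_pos t with h | h
    · rw [h, Nat.mul_zero] at ht; omega
    · exact h
  have hmn : m ≤ n := by omega
  have htdiv : n / (2 * k) = t := by
    rw [ht]; exact Nat.mul_div_cancel_left t (by omega)
  have hmdiv : n / 8 = m := by
    rw [hm]; exact Nat.mul_div_cancel_left m (by omega)
  -- the extension of a coloring of N to all of ι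
  let ext : (↥N → Fin K) → ι → Fin K := fun c i =>
    if h : i ∈ N then c ⟨i, h⟩ else ⟨0, by omega⟩
  -- number of elements of S j receiving color γ
  let X : Fin q → Fin K → (↥N → Fin K) → ℕ := fun j γ c =>
    ((S j).filter fun i => ext c i = γ).card
  -- key counting identity
  have key : ∀ (j : Fin q) (γ : Fin K),
      ∑ c : ↥N → Fin K, 2 ^ X j γ c = (K + 1) ^ m * K ^ (n - m) := by
    intro j γ
    have hW : ∀ c : ↥N → Fin K, (2 : ℕ) ^ X j γ c
        = ∏ x : ↥N, (if (x : ι) ∈ S j then (if c x = γ then 2 else 1) else 1) := by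
      intro c
      have h1 : ∏ x : ↥N, (if (x : ι) ∈ S j then (if c x = γ then 2 else 1) else 1)
          = ∏ i ∈ N, (if i ∈ S j then (if ext c i = γ then 2 else 1) else 1) := by
        rw [Finset.univ_eq_attach, ← Finset.prod_attach N
          (fun i => if i ∈ S j then (if ext c i = γ then 2 else 1) else 1)]
        refine Finset.prod_congr rfl fun x _ => ?_
        have : ext c (x : ι) = c x := by simp [ext]
        rw [this]
      rw [h1, Finset.prod_ite, Finset.prod_const_one, mul_one]
      have h2 : N.filter (fun i => i ∈ S j) = S j := by
        rw [Finset.filter_mem_eq_inter, Finset.inter_eq_right]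
        exact hS j
      rw [h2, Finset.prod_ite, Finset.prod_const_one, mul_one, Finset.prod_const]
    calc ∑ c : ↥N → Fin K, 2 ^ X j γ c
        = ∑ c : ↥N → Fin K, ∏ x : ↥N,
            (if (x : ι) ∈ S j then (if c x = γ then 2 else 1) else 1) :=
          Finset.sum_congr rfl fun c _ => hW c
      _ = ∏ x : ↥N, ∑ b : Fin K,
            (if (x : ι) ∈ S j then (if b = γ then 2 else 1) else 1) :=
          (Fintype.prod_sum (fun (x : ↥N) (b : Fin K) =>
            if (x : ι) ∈ S j then (if b = γ then (2:ℕ) else 1) else 1)).symm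
      _ = ∏ x : ↥N, (if (x : ι) ∈ S j then K + 1 else K) := by
          refine Finset.prod_congr rfl fun x _ => ?_
          by_cases h : (x : ι) ∈ S j
          · simp only [h, if_true]
            have : ∀ b : Fin K, (if b = γ then (2:ℕ) else 1)
                = (if b = γ then 1 else 0) + 1 := by
              intro b; split <;> rfl
            rw [Finset.sum_congr rfl fun b _ => this b, Finset.sum_add_distrib,
              Finset.sum_ite_eq' Finset.univ γ (fun _ => (1:ℕ))]
            simp [Nat.add_comm]
          · simp [h]
      _ = (K + 1) ^ m * K ^ (n - m) := by
          rw [Finset.univ_eq_attach,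
            Finset.prod_attach N (fun i => if i ∈ S j then K + 1 else K),
            Finset.prod_ite, Finset.prod_const, Finset.prod_const]
          have h2 : N.filter (fun i => i ∈ S j) = S j := by
            rw [Finset.filter_mem_eq_inter, Finset.inter_eq_right]
            exact hS j
          have h3 : (N.filter (fun i => ¬ i ∈ S j)).card = n - m := by
            have := Finset.card_filter_add_card_filter_not
              (s := N) (p := fun i => i ∈ S j)
            rw [h2] at this
            rw [hScard j, hmdiv] at this
            omega
          rw [h2, hScard j, hmdiv, h3]
  -- per-pair bad-set bound
  have badbound : ∀ (j : Fin q) (γ : Fin K),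
      ((Finset.univ : Finset (↥N → Fin K)).filter fun c => t ≤ X j γ c).card * 2 ^ t
        ≤ (K + 1) ^ m * K ^ (n - m) := by
    intro j γ
    calc ((Finset.univ : Finset (↥N → Fin K)).filter fun c => t ≤ X j γ c).card * 2 ^ t
        = ∑ c ∈ (Finset.univ : Finset (↥N → Fin K)).filter (fun c => t ≤ X j γ c),
            2 ^ t := by rw [Finset.sum_const, smul_eq_mul]
      _ ≤ ∑ c ∈ (Finset.univ : Finset (↥N → Fin K)).filter (fun c => t ≤ X j γ c),
            2 ^ X j γ c := by
          refine Finset.sum_le_sum fun c hc => ?_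
          exact Nat.pow_le_pow_right (by norm_num) (Finset.mem_filter.mp hc).2
      _ ≤ ∑ c : ↥N → Fin K, 2 ^ X j γ c :=
          Finset.sum_le_sum_of_subset (Finset.filter_subset _ _)
      _ = (K + 1) ^ m * K ^ (n - m) := key j γ
  -- the union-bound set
  set AllBad : Finset (↥N → Fin K) :=
    Finset.univ.filter (fun c => ∃ j γ, t ≤ X j γ c) with hAllBad
  have hunion : AllBad.card * 2 ^ t ≤ q * K * ((K + 1) ^ m * K ^ (n - m)) := by
    have hsub : AllBad ⊆ (Finset.univ : Finset (Fin q × Fin K)).biUnion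
        (fun p => Finset.univ.filter fun c => t ≤ X p.1 p.2 c) := by
      intro c hc
      obtain ⟨j, γ, hjγ⟩ := (Finset.mem_filter.mp hc).2
      exact Finset.mem_biUnion.mpr ⟨(j, γ), Finset.mem_univ _,
        Finset.mem_filter.mpr ⟨Finset.mem_univ _, hjγ⟩⟩
    calc AllBad.card * 2 ^ t
        ≤ (∑ p : Fin q × Fin K,
            (Finset.univ.filter fun c => t ≤ X p.1 p.2 c).card) * 2 ^ t := by
          exact Nat.mul_le_mul_right _
            (le_trans (Finset.card_le_card hsub) (Finset.card_biUnion_le))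
      _ = ∑ p : Fin q × Fin K,
            (Finset.univ.filter fun c => t ≤ X p.1 p.2 c).card * 2 ^ t := by
          rw [Finset.sum_mul]
      _ ≤ ∑ _p : Fin q × Fin K, (K + 1) ^ m * K ^ (n - m) :=
          Finset.sum_le_sum fun p _ => badbound p.1 p.2
      _ = q * K * ((K + 1) ^ m * K ^ (n - m)) := by
          rw [Finset.sum_const, smul_eq_mul]
          congr 1
          simp [Fintype.card_prod]
  -- the analytic inequality
  have hreal : q * K * ((K + 1) ^ m * K ^ (n - m)) < K ^ n * 2 ^ t := by
    have hKpos : (0 : ℝ) < (K : ℝ) := by positivity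
    have hkR : (k : ℝ) = 2 * K := by exact_mod_cast congrArg Nat.cast hkK
    have hnR : (n : ℝ) = 8 * m := by exact_mod_cast congrArg Nat.cast hm
    have htR : (n : ℝ) = 4 * K * t := by
      have : n = 4 * K * t := by rw [ht, hkK]; ring
      exact_mod_cast congrArg Nat.cast this
    rw [← Nat.cast_lt (α := ℝ)]
    push_cast
    have hq2 : (q : ℝ) < 1 / K * Real.exp ((n : ℝ) / (24 * K)) := by
      have h12 : (12 : ℝ) * k = 24 * K := by rw [hkR]; ring
      have h2k' : (2 : ℝ) / k = 1 / K := by rw [hkR]; field_simp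
      rw [← h12, ← h2k']
      exact hqbound
    have hexp1 : ((K : ℝ) + 1) ^ m ≤ (K : ℝ) ^ m * Real.exp ((m : ℝ) / K) := by
      have h1 : (K : ℝ) + 1 ≤ K * Real.exp (1 / K) := by
        have := Real.add_one_le_exp (1 / (K : ℝ))
        calc (K : ℝ) + 1 = K * (1 / K + 1) := by field_simp; ring
          _ ≤ K * Real.exp (1 / K) := by
              exact mul_le_mul_of_nonneg_left this (le_of_lt hKpos)
      calc ((K : ℝ) + 1) ^ m ≤ ((K : ℝ) * Real.exp (1 / K)) ^ m := by
            exact pow_le_pow_left₀ (by positivity) h1 m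
        _ = (K : ℝ) ^ m * Real.exp ((m : ℝ) / K) := by
            rw [mul_pow, ← Real.exp_nat_mul]
            congr 2
            field_simp
    have hexp2 : Real.exp ((n : ℝ) / (24 * K) + (m : ℝ) / K) ≤ (2 : ℝ) ^ t := by
      have hlog : (2 : ℝ) ^ t = Real.exp (t * Real.log 2) := by
        rw [Real.exp_nat_mul, Real.exp_log (by norm_num)]
      rw [hlog]
      apply Real.exp_le_exp.mpr
      have hlog2 : (2 : ℝ) / 3 ≤ Real.log 2 := by
        have := Real.log_two_gt_d9
        linarith
      have hmR : (m : ℝ) = (n : ℝ) / 8 := by rw [hnR]; ring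
      have htR' : (t : ℝ) = (n : ℝ) / (4 * K) := by
        rw [htR]; field_simp
      rw [hmR, htR']
      have hn0 : (0 : ℝ) ≤ (n : ℝ) := Nat.cast_nonneg n
      have hstep : (n : ℝ) / (24 * K) + (n : ℝ) / 8 / K = (n : ℝ) / (6 * K) := by
        field_simp; ring
      rw [hstep]
      have h23 : (n : ℝ) / (6 * K) = (n : ℝ) / (4 * K) * (2 / 3) := by
        field_simp; ring
      rw [h23]
      exact mul_le_mul_of_nonneg_left hlog2 (by positivity)
    have hsplit : (K : ℝ) ^ m * (K : ℝ) ^ (n - m) = (K : ℝ) ^ n := by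
      rw [← pow_add]; congr 1; omega
    calc (q : ℝ) * K * ((K + 1) ^ m * K ^ (n - m))
        < (1 / K * Real.exp ((n : ℝ) / (24 * K))) * K * ((K + 1) ^ m * K ^ (n - m)) := by
          apply mul_lt_mul_of_pos_right _ (by positivity)
          exact mul_lt_mul_of_pos_right hq2 hKpos
      _ = Real.exp ((n : ℝ) / (24 * K)) * ((K + 1) ^ m * K ^ (n - m)) := by
          field_simp
      _ ≤ Real.exp ((n : ℝ) / (24 * K)) * ((K ^ m * Real.exp ((m : ℝ) / K)) * K ^ (n - m)) := by
          apply mul_le_mul_of_nonneg_left _ (le_of_lt (Real.exp_pos _))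
          exact mul_le_mul_of_nonneg_right hexp1 (by positivity)
      _ = Real.exp ((n : ℝ) / (24 * K) + (m : ℝ) / K) * (K ^ n) := by
          rw [Real.exp_add]
          rw [← hsplit]
          ring
      _ ≤ (2 : ℝ) ^ t * (K ^ n) := by
          exact mul_le_mul_of_nonneg_right hexp2 (by positivity)
      _ = (K : ℝ) ^ n * 2 ^ t := by ring
  -- conclude: a good coloring exists
  have hcardU : (Finset.univ : Finset (↥N → Fin K)).card = K ^ n := by
    rw [Finset.card_univ, Fintype.card_fun]
    simp [hN]
  have hlt : AllBad.card < (Finset.univ : Finset (↥N → Fin K)).card := by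
    rw [hcardU]
    have h1 : AllBad.card * 2 ^ t < K ^ n * 2 ^ t := lt_of_le_of_lt hunion hreal
    exact Nat.lt_of_mul_lt_mul_right h1
  obtain ⟨c0, hc0⟩ : ∃ c0 : ↥N → Fin K, c0 ∉ AllBad := by
    by_contra h
    push_neg at h
    have : (Finset.univ : Finset (↥N → Fin K)) ⊆ AllBad := fun c _ => h c
    have := Finset.card_le_card this
    omega
  refine ⟨ext c0, fun j γ => ?_⟩
  rw [htdiv]
  have : ¬ ∃ j γ, t ≤ X j γ c0 := by
    intro hcontra
    exact hc0 (Finset.mem_filter.mpr ⟨Finset.mem_univ _, hcontra⟩)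
  push_neg at this
  exact this j γ
end
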